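/- Let F : 𝔽₂ⁿ → 𝔽₂ⁿ be an APN plateaued function all of whose component functions are unbalanced. Then for all a, α, b ∈ 𝔽₂ⁿ with b ≠ F(a), one has ∑_{(u,v) : u·(a+α) ≠ v·(F(a)+F(α))} (−1)^{u·a + v·b} · W_F(u,v)³ = 0, the sum ranging over pairs (u, v) ∈ 𝔽₂ⁿ × 𝔽₂ⁿ with u·(a+α) ≠ v·(F(a)+F(α)). -/

import Mathlib

/-- The vector space `𝔽₂ⁿ`. -/
abbrev V (n : ℕ) := Fin n → ZMod 2

/-- The standard inner product on `𝔽₂ⁿ`, valued in `𝔽₂`. -/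
def ip {n : ℕ} (x y : V n) : ZMod 2 := ∑ i, x i * y i

/-- `F` is almost perfect nonlinear: for `a ≠ 0`, `F (x + a) + F x = b` has at most 2
solutions. -/
def IsAPN {G : Type*} [AddCommGroup G] [Fintype G] [DecidableEq G] (F : G → G) : Prop :=
  ∀ a b : G, a ≠ 0 → (Finset.univ.filter (fun x => F (x + a) + F x = b)).card ≤ 2

/-- The Walsh transform `W_F(u, v) = ∑_x (−1)^(v·F(x) + u·x)`. -/
def walsh {n : ℕ} (F : V n → V n) (u v : V n) : ℤ :=
  ∑ x : V n, (-1 : ℤ) ^ (ip v (F x) + ip u x).val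

/-- The graph `G_F = {(x, F(x)) : x ∈ 𝔽₂ⁿ}` of `F`, as a finite set. -/
def graphF {n : ℕ} (F : V n → V n) : Finset (V n × V n) :=
  Finset.univ.image (fun x => (x, F x))

/-- The exclude multiplicity of `y` w.r.t. `S`: the number of 3-element subsets of `S`
whose elements sum to `y`. -/
def excMult {G : Type*} [AddCommGroup G] [DecidableEq G] (S : Finset G) (y : G) : ℕ :=
  ((S.powersetCard 3).filter (fun T => T.sum id = y)).card

/-!
Plateauedness gives `W_F(u, v)³ = λ_v² W_F(u, v)`, so by Walsh inversion the full signed sum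
`∑_{u,v} (−1)^(u·a + v·b) W_F(u, v)³` equals `2ⁿ ∑_v λ_v² (−1)^(v·(b + F(a)))`; in particular it
does not change when `(a, b)` is replaced by `(α, b + F(a) + F(α))`. This replacement multiplies the
term at `(u, v)` by `(−1)^(u·(a+α) + v·(F(a)+F(α)))`, so it negates exactly the terms of the sum in
question, which therefore vanishes.
-/

open Finset

def chi (s : ZMod 2) : ℤ := (-1) ^ s.val

lemma chi_add (s t : ZMod 2) : chi (s + t) = chi s * chi t := by
  revert s t; decide

lemma chi_of_ne_zero {s : ZMod 2} (h : s ≠ 0) : chi s = -1 := by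
  revert s; decide

lemma chi_add_of_ne {s t : ZMod 2} (h : s ≠ t) : chi (s + t) = -1 := by
  revert s t; decide

lemma chi_add_self (s : ZMod 2) : chi (s + s) = 1 := by
  revert s; decide

lemma sum_filter_ne_eq_zero_of_sum_chi_smul_eq {ι M : Type*} [AddCommGroup M] [IsAddTorsionFree M]
    (s : Finset ι) (x y : ι → ZMod 2) (f : ι → M)
    (h : ∑ i ∈ s, chi (x i + y i) • f i = ∑ i ∈ s, f i) :
    ∑ i ∈ s with x i ≠ y i, f i = 0 := by
  have hne : ∑ i ∈ s with x i ≠ y i, chi (x i + y i) • f i = -∑ i ∈ s with x i ≠ y i, f i := by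
    rw [← sum_neg_distrib]
    refine sum_congr rfl fun i hi => ?_
    rw [chi_add_of_ne (mem_filter.mp hi).2, neg_one_zsmul]
  have heq : ∑ i ∈ s with ¬x i ≠ y i, chi (x i + y i) • f i = ∑ i ∈ s with ¬x i ≠ y i, f i := by
    refine sum_congr rfl fun i hi => ?_
    rw [not_not.mp (mem_filter.mp hi).2, chi_add_self, one_zsmul]
  rw [← sum_filter_add_sum_filter_not s (fun i => x i ≠ y i), hne, heq,
    ← sum_filter_add_sum_filter_not s (fun i => x i ≠ y i)] at h
  rw [← two_nsmul_eq_zero, two_nsmul]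
  nth_rewrite 1 [← add_right_cancel h]
  exact neg_add_cancel _

section InnerProduct

variable {n : ℕ}

lemma ip_add_left (x y z : V n) : ip (x + y) z = ip x z + ip y z := by
  simp [ip, add_mul, sum_add_distrib]

lemma ip_add_right (x y z : V n) : ip x (y + z) = ip x y + ip x z := by
  simp [ip, mul_add, sum_add_distrib]

lemma ip_single_one_left (i : Fin n) (c : V n) : ip (Pi.single i 1) c = c i := by
  simp [ip, Pi.single_apply]

lemma sum_chi_ip (c : V n) : ∑ u : V n, chi (ip u c) = if c = 0 then 2 ^ n else 0 := by
  split_ifs with hc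
  · simp [hc, ip, chi, card_univ]
  obtain ⟨i, hi⟩ := Function.ne_iff.mp hc
  have hflip : ∀ u : V n, chi (ip (u + Pi.single i 1) c) = -chi (ip u c) := fun u => by
    rw [ip_add_left, chi_add, ip_single_one_left, chi_of_ne_zero hi, mul_neg_one]
  have := Equiv.sum_comp (Equiv.addRight (Pi.single i 1 : V n)) fun u => chi (ip u c)
  simp only [Equiv.coe_addRight, hflip, sum_neg_distrib] at this
  linarith

end InnerProduct

section Walsh

variable {n : ℕ} (F : V n → V n)

lemma walsh_eq_sum_chi (u v : V n) : walsh F u v = ∑ x : V n, chi (ip v (F x) + ip u x) := rfl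

lemma sum_chi_mul_walsh (a v : V n) :
    ∑ u : V n, chi (ip u a) * walsh F u v = 2 ^ n * chi (ip v (F a)) := calc
  ∑ u : V n, chi (ip u a) * walsh F u v
      = ∑ x : V n, chi (ip v (F x)) * ∑ u : V n, chi (ip u (x + a)) := by
    simp only [walsh_eq_sum_chi, mul_sum]
    rw [sum_comm]
    refine sum_congr rfl fun x _ => sum_congr rfl fun u _ => ?_
    rw [chi_add, ip_add_right, chi_add]
    ring
  _ = 2 ^ n * chi (ip v (F a)) := by
    simp only [sum_chi_ip, ← ZModModule.sub_eq_add, sub_eq_zero, mul_ite, mul_zero,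
      sum_ite_eq', mem_univ, if_true, mul_comm]

lemma sum_chi_mul_walsh_cube (lam : V n → ℤ)
    (hcube : ∀ u v, walsh F u v ^ 3 = lam v ^ 2 * walsh F u v) (a b : V n) :
    ∑ uv : V n × V n, chi (ip uv.1 a + ip uv.2 b) * walsh F uv.1 uv.2 ^ 3
      = 2 ^ n * ∑ v : V n, lam v ^ 2 * chi (ip v (b + F a)) := calc
  _ = ∑ v : V n, lam v ^ 2 * chi (ip v b) * ∑ u : V n, chi (ip u a) * walsh F u v := by
    rw [Fintype.sum_prod_type, sum_comm]
    refine sum_congr rfl fun v _ => ?_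
    rw [mul_sum]
    refine sum_congr rfl fun u _ => ?_
    rw [hcube, chi_add]
    ring
  _ = _ := by
    simp only [sum_chi_mul_walsh, mul_sum, ip_add_right, chi_add]
    refine sum_congr rfl fun v _ => ?_
    ring

end Walsh

theorem plateaued_unbalanced_walsh_cube_sum_zero_general (n : ℕ) (F : V n → V n)
    (hplateaued : ∀ v : V n, ∃ lam : ℤ, 0 ≤ lam ∧
      ∀ u : V n, walsh F u v = 0 ∨ walsh F u v = lam ∨ walsh F u v = -lam)
    (a α b : V n) :
    ∑ uv ∈ Finset.univ.filter
        (fun uv : V n × V n => ip uv.1 (a + α) ≠ ip uv.2 (F a + F α)),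
        (-1 : ℤ) ^ (ip uv.1 a + ip uv.2 b).val * walsh F uv.1 uv.2 ^ 3 = 0 := by
  choose lam _ hlam using hplateaued
  have hcube : ∀ u v, walsh F u v ^ 3 = lam v ^ 2 * walsh F u v := fun u v => by
    rcases hlam v u with h | h | h <;> rw [h] <;> ring
  have hshift : ∀ u v : V n, ip u (a + α) + ip v (F a + F α) + (ip u a + ip v b)
      = ip u α + ip v (b + F a + F α) := fun u v => by
    simp only [ip_add_right]
    linear_combination ZModModule.add_self (ip u a)
  refine sum_filter_ne_eq_zero_of_sum_chi_smul_eq _ _ _ _ ?_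
  calc ∑ uv : V n × V n, chi (ip uv.1 (a + α) + ip uv.2 (F a + F α)) •
        (chi (ip uv.1 a + ip uv.2 b) * walsh F uv.1 uv.2 ^ 3)
      = ∑ uv : V n × V n, chi (ip uv.1 α + ip uv.2 (b + F a + F α)) * walsh F uv.1 uv.2 ^ 3 := by
        simp only [smul_eq_mul, ← mul_assoc, ← chi_add, hshift]
    _ = ∑ uv : V n × V n, chi (ip uv.1 a + ip uv.2 b) * walsh F uv.1 uv.2 ^ 3 := by
        rw [sum_chi_mul_walsh_cube F lam hcube, sum_chi_mul_walsh_cube F lam hcube,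
          add_assoc (b + F a), ZModModule.add_self, add_zero]

/-- Let `F : 𝔽₂ⁿ → 𝔽₂ⁿ` be an APN plateaued function all of whose component
functions are unbalanced. Then for all `a, α, b` with `b ≠ F a`,
`∑_{(u,v) : u·(a+α) ≠ v·(F a + F α)} (−1)^(u·a + v·b) W_F(u,v)³ = 0`. -/
theorem plateaued_unbalanced_walsh_cube_sum_zero (n : ℕ) (F : V n → V n) (hF : IsAPN F)
    (hplateaued : ∀ v : V n, ∃ lam : ℤ, 0 ≤ lam ∧
      ∀ u : V n, walsh F u v = 0 ∨ walsh F u v = lam ∨ walsh F u v = -lam)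
    (hunbalanced : ∀ v : V n, v ≠ 0 → walsh F 0 v ≠ 0)
    (a α b : V n) (hb : b ≠ F a) :
    ∑ uv ∈ Finset.univ.filter
        (fun uv : V n × V n => ip uv.1 (a + α) ≠ ip uv.2 (F a + F α)),
        (-1 : ℤ) ^ (ip uv.1 a + ip uv.2 b).val * walsh F uv.1 uv.2 ^ 3 = 0 :=
  plateaued_unbalanced_walsh_cube_sum_zero_general n F hplateaued a α b
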